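/- With the projections π_a as above, the complementary projection satisfies ‖π_a^⊥(f,g)‖²_{Ḣ¹×L²(r>a)} = ∫_a^∞ f'(r)² r⁴ dr − 3a³ f(a)² + ∫_a^∞ g(r)² r⁴ dr − a(∫_a^∞ r g(r) dr)²; in particular ∫_a^∞ f'(r)² r⁴ dr ≥ 3a³ f(a)² and ∫_a^∞ g(r)² r⁴ dr ≥ a(∫_a^∞ r g(r) dr)² for all radial (f,g) ∈ Ḣ¹ × L²(r > a) on ℝ⁵. -/
import Mathlib


open Real Set MeasureTheory

/-- Norm of the complementary projection `π_a^⊥(f,g)` in `Ḣ¹ × L²(r > a)` on ℝ⁵,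
and the resulting inequalities. -/
theorem stmt10 (a : ℝ) (ha : 0 < a) (f f' g : ℝ → ℝ)
    (hcont : ContinuousOn f (Set.Ici a))
    (hderiv : ∀ r ∈ Set.Ioi a, HasDerivAt f (f' r) r)
    (hflim : Filter.Tendsto f Filter.atTop (nhds 0))
    (hf'int : IntegrableOn (fun r : ℝ => (f' r)^2 * r^4) (Set.Ioi a))
    (hgint : IntegrableOn (fun r : ℝ => (g r)^2 * r^4) (Set.Ioi a))
    (hrg : IntegrableOn (fun r : ℝ => r * g r) (Set.Ioi a)) :
    ((∫ r in Set.Ioi a, (f' r + 3 * a^3 * f a * r ^ (-4:ℝ))^2 * r^4) +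
      (∫ r in Set.Ioi a, (g r - a * (∫ ρ in Set.Ioi a, ρ * g ρ) * r ^ (-3:ℝ))^2 * r^4) =
      (∫ r in Set.Ioi a, (f' r)^2 * r^4) - 3 * a^3 * (f a)^2 +
        (∫ r in Set.Ioi a, (g r)^2 * r^4) - a * (∫ ρ in Set.Ioi a, ρ * g ρ)^2) ∧
    (3 * a^3 * (f a)^2 ≤ ∫ r in Set.Ioi a, (f' r)^2 * r^4) ∧
    (a * (∫ ρ in Set.Ioi a, ρ * g ρ)^2 ≤ ∫ r in Set.Ioi a, (g r)^2 * r^4) := by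
  have haT : MeasurableSet (Set.Ioi a) := measurableSet_Ioi
  set I : ℝ := ∫ ρ in Set.Ioi a, ρ * g ρ with hI
  set c : ℝ := 3 * a^3 * f a with hc
  set d : ℝ := a * I with hd
  -- integrability of powers
  have hr4 : IntegrableOn (fun r : ℝ => r ^ (-4:ℝ)) (Set.Ioi a) :=
    integrableOn_Ioi_rpow_of_lt (by norm_num) ha
  have hr2 : IntegrableOn (fun r : ℝ => r ^ (-2:ℝ)) (Set.Ioi a) :=
    integrableOn_Ioi_rpow_of_lt (by norm_num) ha
  -- values of the power integrals
  have ir4 : (∫ r in Set.Ioi a, r ^ (-4:ℝ)) = (a^3)⁻¹ / 3 := by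
    rw [integral_Ioi_rpow_of_lt (by norm_num) ha, ← rpow_natCast a 3, ← rpow_neg ha.le]
    norm_num
  have ir2 : (∫ r in Set.Ioi a, r ^ (-2:ℝ)) = a⁻¹ := by
    rw [integral_Ioi_rpow_of_lt (by norm_num) ha, ← rpow_neg_one a]
    norm_num
  -- measurability of f'
  have hmeas : AEStronglyMeasurable f' (volume.restrict (Set.Ioi a)) := by
    have h1 : ∀ᵐ r ∂(volume.restrict (Set.Ioi a)), deriv f r = f' r := by
      filter_upwards [ae_restrict_mem haT] with r hr
      exact (hderiv r hr).deriv
    exact (measurable_deriv f).aestronglyMeasurable.congr h1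
  -- integrability of f'
  have hf'L1 : IntegrableOn f' (Set.Ioi a) := by
    refine Integrable.mono' ((hf'int.add hr4).div_const 2) hmeas ?_
    filter_upwards [ae_restrict_mem haT] with r hr
    have hr0 : 0 < r := ha.trans hr
    have h4 : r ^ (-4:ℝ) = ((r^2)⁻¹)^2 := by
      rw [rpow_neg hr0.le, show (4:ℝ) = ((4:ℕ):ℝ) by norm_num, rpow_natCast]
      ring
    have habs : |f' r| = |f' r * r^2| * (r^2)⁻¹ := by
      rw [abs_mul, abs_of_nonneg (by positivity : (0:ℝ) ≤ r^2)]
      field_simp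
    simp only [Pi.add_apply]
    rw [Real.norm_eq_abs, habs, h4]
    calc |f' r * r^2| * (r^2)⁻¹ ≤ ((f' r * r^2)^2 + ((r^2)⁻¹)^2) / 2 := by
          nlinarith [sq_nonneg (|f' r * r^2| - (r^2)⁻¹), abs_nonneg (f' r * r^2),
            le_abs_self (f' r * r^2), neg_abs_le (f' r * r^2), sq_abs (f' r * r^2)]
      _ = ((f' r)^2 * r^4 + ((r^2)⁻¹)^2) / 2 := by ring
  -- FTC
  have hFTC : (∫ r in Set.Ioi a, f' r) = 0 - f a :=
    integral_Ioi_of_hasDerivAt_of_tendsto (hcont.continuousWithinAt Set.self_mem_Ici)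
      hderiv hf'L1 hflim
  -- first identity
  have e1 : Set.EqOn (fun r : ℝ => (f' r + c * r ^ (-4:ℝ))^2 * r^4)
      (fun r : ℝ => (f' r)^2 * r^4 + (2*c) * f' r + c^2 * r ^ (-4:ℝ)) (Set.Ioi a) := by
    intro r hr
    have hr0 : 0 < r := ha.trans hr
    have h4 : r ^ (-4:ℝ) = (r^4)⁻¹ := by
      rw [rpow_neg hr0.le, show (4:ℝ) = ((4:ℕ):ℝ) by norm_num, rpow_natCast]
    simp only [h4]
    field_simp
    ring
  have hsplit1 : (∫ r in Set.Ioi a, (f' r + c * r ^ (-4:ℝ))^2 * r^4)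
      = (∫ r in Set.Ioi a, (f' r)^2 * r^4) + (2*c) * (∫ r in Set.Ioi a, f' r)
        + c^2 * (∫ r in Set.Ioi a, r ^ (-4:ℝ)) := by
    have i2 : Integrable (fun r : ℝ => (2*c) * f' r) (volume.restrict (Set.Ioi a)) :=
      hf'L1.const_mul _
    have i3 : Integrable (fun r : ℝ => c^2 * r ^ (-4:ℝ)) (volume.restrict (Set.Ioi a)) :=
      hr4.const_mul _
    have i1 : Integrable (fun r : ℝ => (f' r)^2 * r^4 + (2*c) * f' r)
        (volume.restrict (Set.Ioi a)) := hf'int.add i2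
    rw [setIntegral_congr_fun haT e1, integral_add i1 i3, integral_add hf'int i2,
      integral_const_mul, integral_const_mul]
  have T1 : (∫ r in Set.Ioi a, (f' r + c * r ^ (-4:ℝ))^2 * r^4)
      = (∫ r in Set.Ioi a, (f' r)^2 * r^4) - 3 * a^3 * (f a)^2 := by
    rw [hsplit1, hFTC, ir4, hc]
    field_simp
    ring
  -- second identity
  have e2 : Set.EqOn (fun r : ℝ => (g r - d * r ^ (-3:ℝ))^2 * r^4)
      (fun r : ℝ => (g r)^2 * r^4 + (-2*d) * (r * g r) + d^2 * r ^ (-2:ℝ)) (Set.Ioi a) := by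
    intro r hr
    have hr0 : 0 < r := ha.trans hr
    have h3 : r ^ (-3:ℝ) = (r^3)⁻¹ := by
      rw [rpow_neg hr0.le, show (3:ℝ) = ((3:ℕ):ℝ) by norm_num, rpow_natCast]
    have h2 : r ^ (-2:ℝ) = (r^2)⁻¹ := by
      rw [rpow_neg hr0.le, show (2:ℝ) = ((2:ℕ):ℝ) by norm_num, rpow_natCast]
    simp only [h3, h2]
    field_simp
    ring
  have hsplit2 : (∫ r in Set.Ioi a, (g r - d * r ^ (-3:ℝ))^2 * r^4)
      = (∫ r in Set.Ioi a, (g r)^2 * r^4) + (-2*d) * I + d^2 * (∫ r in Set.Ioi a, r ^ (-2:ℝ)) := by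
    have i2 : Integrable (fun r : ℝ => (-2*d) * (r * g r)) (volume.restrict (Set.Ioi a)) :=
      hrg.const_mul _
    have i3 : Integrable (fun r : ℝ => d^2 * r ^ (-2:ℝ)) (volume.restrict (Set.Ioi a)) :=
      hr2.const_mul _
    have i1 : Integrable (fun r : ℝ => (g r)^2 * r^4 + (-2*d) * (r * g r))
        (volume.restrict (Set.Ioi a)) := hgint.add i2
    rw [setIntegral_congr_fun haT e2, integral_add i1 i3, integral_add hgint i2,
      integral_const_mul, integral_const_mul]
  have T2 : (∫ r in Set.Ioi a, (g r - d * r ^ (-3:ℝ))^2 * r^4)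
      = (∫ r in Set.Ioi a, (g r)^2 * r^4) - a * I^2 := by
    rw [hsplit2, ir2, hd]
    field_simp
    ring
  -- nonnegativity
  have n1 : 0 ≤ ∫ r in Set.Ioi a, (f' r + c * r ^ (-4:ℝ))^2 * r^4 :=
    integral_nonneg (fun r => by positivity)
  have n2 : 0 ≤ ∫ r in Set.Ioi a, (g r - d * r ^ (-3:ℝ))^2 * r^4 :=
    integral_nonneg (fun r => by positivity)
  refine ⟨by rw [show (3:ℝ) * a^3 * f a = c from rfl] at *; rw [T1, T2]; ring,
    by linarith [T1, n1], by linarith [T2, n2]⟩
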